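/- arXiv:1605.01947 — 2 statements merged into one kernel-verified Lean document; each statement's English description precedes it below -/
import Mathlib

section
/- Let f, h: ℝⁿ → ℝ with h concave and differentiable, and let S ⊆ ℝⁿ be nonempty. Suppose p⁽ᵗ⁾ ∈ S and p⁽ᵗ⁺¹⁾ ∈ S maximizes the function p ↦ f(p) − h(p⁽ᵗ⁾) − ⟨∇h(p⁽ᵗ⁾), p − p⁽ᵗ⁾⟩ over S. Then f(p⁽ᵗ⁺¹⁾) − h(p⁽ᵗ⁺¹⁾) ≥ f(p⁽ᵗ⁾) − h(p⁽ᵗ⁾). -/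
/-!
The linearization of a concave `h` at `pt` majorizes `h`, so the surrogate objective is a
minorant of `f - h` that agrees with it at `pt`; hence
`(f - h) pt = surrogate pt ≤ surrogate pt1 ≤ (f - h) pt1`.
-/

open AffineMap

theorem ConcaveOn.le_add_of_hasFDerivAt {E : Type*} [NormedAddCommGroup E] [NormedSpace ℝ E]
    {s : Set E} {h : E → ℝ} {h' : E →L[ℝ] ℝ} {x y : E} (hconc : ConcaveOn ℝ s h)
    (hx : x ∈ s) (hy : y ∈ s) (hderiv : HasFDerivAt h h' x) :
    h y ≤ h x + h' (y - x) := by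
  have hline : ConcaveOn ℝ (lineMap (k := ℝ) x y ⁻¹' s) (h ∘ lineMap x y) :=
    hconc.comp_affineMap (lineMap x y)
  have hline_deriv : HasDerivAt (h ∘ lineMap (k := ℝ) x y) (h' (y - x)) 0 := by
    simpa using
      hderiv.comp_hasDerivAt_of_eq (0 : ℝ) hasDerivAt_lineMap (lineMap_apply_zero x y).symm
  have hslope := hline.slope_le_of_hasDerivAt (x := 0) (y := 1)
    (by simpa using hx) (by simpa using hy) one_pos hline_deriv
  simp only [slope_def_field, Function.comp_apply, lineMap_apply_zero, lineMap_apply_one,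
    sub_zero, div_one] at hslope
  linarith

theorem stmt_5_general (n : ℕ) (f h : (Fin n → ℝ) → ℝ) (S : Set (Fin n → ℝ))
    (hconc : ConcaveOn ℝ Set.univ h)
    (hdiff : Differentiable ℝ h)
    (pt pt1 : Fin n → ℝ) (hpt : pt ∈ S)
    (hmax : ∀ p ∈ S,
      f p - h pt - fderiv ℝ h pt (p - pt)
        ≤ f pt1 - h pt - fderiv ℝ h pt (pt1 - pt)) :
    f pt - h pt ≤ f pt1 - h pt1 := by
  have hsurrogate := hmax pt hpt
  have htangent := hconc.le_add_of_hasFDerivAt (Set.mem_univ pt) (Set.mem_univ pt1)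
    (hdiff pt).hasFDerivAt
  simp only [sub_self, map_zero, sub_zero] at hsurrogate
  linarith

/-- Monotone improvement of the DC iteration: maximizing the linearized
surrogate does not decrease the objective f − h. -/
theorem stmt_5 (n : ℕ) (f h : (Fin n → ℝ) → ℝ) (S : Set (Fin n → ℝ))
    (hconc : ConcaveOn ℝ Set.univ h)
    (hdiff : Differentiable ℝ h)
    (hS : S.Nonempty)
    (pt pt1 : Fin n → ℝ) (hpt : pt ∈ S) (hpt1 : pt1 ∈ S)
    (hmax : ∀ p ∈ S,
      f p - h pt - fderiv ℝ h pt (p - pt)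
        ≤ f pt1 - h pt - fderiv ℝ h pt (pt1 - pt)) :
    f pt - h pt ≤ f pt1 - h pt1 :=
  stmt_5_general n f h S hconc hdiff pt pt1 hpt hmax
end

section
/- Fix q > 0 and positive constants w, v, g, h, N, M, β, I with w ≥ v. Define L(p) = w·log(1 + g·p/(N + I·q)) + v·log(1 + h·q/(M + β·p)) on [0, P]. Then the maximum of L over [0, P] is attained at p = 0 or p = P. -/
/-!
The derivative of `L` has the sign of the numerator
`φ(p) = w g (M + β p)(M + β p + c) - v c β (D + g p)` (with `c = h q`, `D = N + I q`), and
`φ(y) - φ(x) = g β (y - x) (w (2M + β (x + y)) + (w - v) c) ≥ 0` for `0 ≤ x ≤ y` once `w ≥ v`.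
So `L'` changes sign at most once, from `-` to `+`: `L` first decreases and then increases,
and its maximum on `[0, P]` is at an endpoint.
-/

open Set

theorem le_max_of_hasDerivAt_of_neg_imp_nonpos {f f' : ℝ → ℝ} {a b : ℝ}
    (hf : ContinuousOn f (Icc a b)) (hf' : ∀ x ∈ Ioo a b, HasDerivAt f (f' x) x)
    (hsign : ∀ x ∈ Ioo a b, ∀ y ∈ Ioo a b, x ≤ y → f' y < 0 → f' x ≤ 0) :
    ∀ p ∈ Icc a b, f p ≤ max (f a) (f b) := by
  intro p ⟨hap, hpb⟩
  by_cases hneg : ∃ y ∈ Ioo p b, f' y < 0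
  · obtain ⟨y, hy, hy'⟩ := hneg
    have hanti : AntitoneOn f (Icc a p) := by
      refine antitoneOn_of_hasDerivWithinAt_nonpos (f' := f') (convex_Icc a p)
        (hf.mono (Icc_subset_Icc le_rfl hpb)) (fun x hx => ?_) (fun x hx => ?_)
      all_goals rw [interior_Icc] at hx
      · exact (hf' x ⟨hx.1, hx.2.trans_le hpb⟩).hasDerivWithinAt
      · exact hsign x ⟨hx.1, hx.2.trans_le hpb⟩ y ⟨hap.trans_lt hy.1, hy.2⟩
          (hx.2.trans hy.1).le hy'
    exact (hanti ⟨le_rfl, hap⟩ ⟨hap, le_rfl⟩ hap).trans (le_max_left _ _)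
  · push Not at hneg
    have hmono : MonotoneOn f (Icc p b) := by
      refine monotoneOn_of_hasDerivWithinAt_nonneg (f' := f') (convex_Icc p b)
        (hf.mono (Icc_subset_Icc hap le_rfl)) (fun x hx => ?_) (fun x hx => ?_)
      all_goals rw [interior_Icc] at hx
      · exact (hf' x ⟨hap.trans_lt hx.1, hx.2⟩).hasDerivWithinAt
      · exact hneg x hx
    exact (hmono ⟨le_rfl, hpb⟩ ⟨hpb, le_rfl⟩ hpb).trans (le_max_right _ _)

section SumRate

variable (w v g c D M β : ℝ)

noncomputable def sumRate (p : ℝ) : ℝ :=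
  w * Real.log (1 + g * p / D) + v * Real.log (1 + c / (M + β * p))

def sumRateDerivNum (p : ℝ) : ℝ :=
  w * g * ((M + β * p) * (M + β * p + c)) - v * c * β * (D + g * p)

noncomputable def sumRateDeriv (p : ℝ) : ℝ :=
  w * g / (D + g * p) - v * c * β / ((M + β * p) * (M + β * p + c))

variable {w v g c D M β}

theorem hasDerivAt_sumRate {p : ℝ} (hD : D ≠ 0) (hDp : D + g * p ≠ 0) (hMp : M + β * p ≠ 0)
    (hMpc : M + β * p + c ≠ 0) :
    HasDerivAt (sumRate w v g c D M β) (sumRateDeriv w v g c D M β p) p := by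
  have hlin : HasDerivAt (fun x => M + β * x) β p := by
    simpa using ((hasDerivAt_id p).const_mul β).const_add M
  have h1 : HasDerivAt (fun x => 1 + g * x / D) (g / D) p := by
    simpa using (((hasDerivAt_id p).const_mul g).div_const D).const_add 1
  have h2 : HasDerivAt (fun x => 1 + c / (M + β * x)) (-(c * β) / (M + β * p) ^ 2) p := by
    simpa using ((hasDerivAt_const p c).div hlin hMp).const_add 1
  have e1 : 1 + g * p / D = (D + g * p) / D := by field_simp
  have e2 : 1 + c / (M + β * p) = (M + β * p + c) / (M + β * p) := by field_simp
  have hne1 : 1 + g * p / D ≠ 0 := e1 ▸ div_ne_zero hDp hD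
  have hne2 : 1 + c / (M + β * p) ≠ 0 := e2 ▸ div_ne_zero hMpc hMp
  refine (((h1.log hne1).const_mul w).add ((h2.log hne2).const_mul v)).congr_deriv ?_
  rw [sumRateDeriv, e1, e2]
  field_simp
  ring

theorem sumRateDeriv_eq_div_sumRateDerivNum {p : ℝ} (hDp : D + g * p ≠ 0) (hMp : M + β * p ≠ 0)
    (hMpc : M + β * p + c ≠ 0) :
    sumRateDeriv w v g c D M β p = sumRateDerivNum w v g c D M β p /
        ((D + g * p) * ((M + β * p) * (M + β * p + c))) := by
  rw [sumRateDeriv, sumRateDerivNum, div_sub_div _ _ hDp (mul_ne_zero hMp hMpc)]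
  ring

theorem sumRateDerivNum_monotoneOn (hg : 0 ≤ g) (hM : 0 ≤ M) (hβ : 0 ≤ β) (hc : 0 ≤ c)
    (hw : 0 ≤ w) (hwv : v ≤ w) : MonotoneOn (sumRateDerivNum w v g c D M β) (Ici 0) := by
  intro x hx y hy hxy
  have hfactor : 0 ≤ w * (2 * M + β * (x + y)) + (w - v) * c := by
    have : (0 : ℝ) ≤ x + y := add_nonneg hx hy
    have : 0 ≤ w - v := sub_nonneg.2 hwv
    positivity
  have hdiff : sumRateDerivNum w v g c D M β y - sumRateDerivNum w v g c D M β x =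
      g * β * (y - x) * (w * (2 * M + β * (x + y)) + (w - v) * c) := by
    rw [sumRateDerivNum, sumRateDerivNum]; ring
  have : 0 ≤ g * β * (y - x) * (w * (2 * M + β * (x + y)) + (w - v) * c) :=
    mul_nonneg (mul_nonneg (mul_nonneg hg hβ) (sub_nonneg.2 hxy)) hfactor
  linarith

theorem sumRateDeriv_nonpos_of_neg {x y : ℝ} (hD : 0 < D) (hg : 0 ≤ g) (hM : 0 < M)
    (hβ : 0 ≤ β) (hc : 0 ≤ c) (hw : 0 ≤ w) (hwv : v ≤ w) (hx : 0 ≤ x) (hxy : x ≤ y)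
    (hy : sumRateDeriv w v g c D M β y < 0) : sumRateDeriv w v g c D M β x ≤ 0 := by
  have hy0 : 0 ≤ y := hx.trans hxy
  rw [sumRateDeriv_eq_div_sumRateDerivNum (by positivity) (by positivity) (by positivity)] at hy ⊢
  have hnum_y := neg_of_div_neg_left hy (by positivity)
  have hnum_x := sumRateDerivNum_monotoneOn (D := D) hg hM.le hβ hc hw hwv hx hy0 hxy
  exact div_nonpos_of_nonpos_of_nonneg (hnum_x.trans hnum_y.le) (by positivity)

end SumRate

theorem stmt_9_general (w v g h N M β I q P : ℝ)
    (hw : 0 < w) (hg : 0 < g) (hh : 0 < h)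
    (hN : 0 < N) (hM : 0 < M) (hβ : 0 < β) (hI : 0 < I)
    (hq : 0 < q) (hwv : v ≤ w)
    (L : ℝ → ℝ)
    (hL : L = fun p => w * Real.log (1 + g * p / (N + I * q))
        + v * Real.log (1 + h * q / (M + β * p))) :
    ∀ p ∈ Icc (0 : ℝ) P, L p ≤ max (L 0) (L P) := by
  have hD : 0 < N + I * q := by positivity
  have hc : 0 ≤ h * q := by positivity
  have hderiv : ∀ p, 0 ≤ p → HasDerivAt L (sumRateDeriv w v g (h * q) (N + I * q) M β p) p := by
    intro p hp
    rw [hL]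
    exact hasDerivAt_sumRate hD.ne' (by positivity) (by positivity) (by positivity)
  refine le_max_of_hasDerivAt_of_neg_imp_nonpos
    (fun p hp => (hderiv p hp.1).continuousAt.continuousWithinAt)
    (fun p hp => hderiv p hp.1.le) ?_
  intro x hx y _ hxy hy
  exact sumRateDeriv_nonpos_of_neg hD hg.le hM hβ.le hc hw.le hwv hx.1.le hxy hy

/-- When the downlink weight dominates the uplink weight (w ≥ v), the
single-variable weighted sum-rate attains its maximum over [0,P] at an
endpoint. -/
theorem stmt_9 (w v g h N M β I q P : ℝ)
    (hw : 0 < w) (hv : 0 < v) (hg : 0 < g) (hh : 0 < h)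
    (hN : 0 < N) (hM : 0 < M) (hβ : 0 < β) (hI : 0 < I)
    (hq : 0 < q) (hP : 0 < P) (hwv : v ≤ w)
    (L : ℝ → ℝ)
    (hL : L = fun p => w * Real.log (1 + g * p / (N + I * q))
        + v * Real.log (1 + h * q / (M + β * p))) :
    ∀ p ∈ Icc (0 : ℝ) P, L p ≤ max (L 0) (L P) :=
  stmt_9_general w v g h N M β I q P hw hg hh hN hM hβ hI hq hwv L hL
end
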